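/- Let p be a prime, k a perfect field of characteristic p, n ≥ 1 and m ≥ 1 integers, and let Σ denote either Σ_s (with p odd and 1 ≤ s ≤ (p−1)/2) or Σ_{1,t} (with t ≥ 1), formed inside M_n(W(k)). Let Φ : W(k)^n → W(k)^n be an additive map with Φ(a·x) = σ(a)·Φ(x) for all a ∈ W(k), and Θ : W(k)^n → W(k)^n an additive map with Θ(σ(a)·x) = a·Θ(x) for all a ∈ W(k), such that Φ∘Θ = Θ∘Φ = p·id. Let X ∈ Σ, regarded as a W(k)-linear endomorphism of W(k)^n, and assume that X∘Φ − Φ∘X and X∘Θ − Θ∘X take all their values in p^m·W(k)^n. Then e₁(X)∘Φ − Φ∘e₁(X), e₁(X)∘Θ − Θ∘e₁(X), l₁(X)∘Φ − Φ∘l₁(X), and l₁(X)∘Θ − Θ∘l₁(X) all take their values in p^m·W(k)^n, where e₁(X), l₁(X) ∈ Σ are the V-adic limits of the exponential and logarithmic partial sums of X. -/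

import Mathlib

/-- The matrix of `j`-th Witt coordinates of a matrix of Witt vectors. -/
def wittPi (p : ℕ) {A : Type*} {n : ℕ} (j : ℕ)
    (X : Matrix (Fin n) (Fin n) (WittVector p A)) : Matrix (Fin n) (Fin n) A :=
  X.map fun w => w.coeff j

/-- `Σ_s`: matrices of Witt vectors whose `0`-th Witt coordinate matrix is `s`-step nilpotent. -/
def SigmaS (p : ℕ) {A : Type*} [CommRing A] {n : ℕ} (s : ℕ) :
    Set (Matrix (Fin n) (Fin n) (WittVector p A)) :=
  {X | wittPi p 0 X ^ s = 0}

/-- `Σ_{1,t}`: matrices of Witt vectors whose `0`-th Witt coordinate matrix vanishes and whose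
`1`-st Witt coordinate matrix is `t`-step nilpotent. -/
def SigmaOneT (p : ℕ) {A : Type*} [CommRing A] {n : ℕ} (t : ℕ) :
    Set (Matrix (Fin n) (Fin n) (WittVector p A)) :=
  {X | wittPi p 0 X = 0 ∧ wittPi p 1 X ^ t = 0}

/-- The predicate "`S` is either `Σ_s` (with `p` odd and `1 ≤ s ≤ (p-1)/2`) or `Σ_{1,t}`
(with `t ≥ 1`)". -/
def IsSigmaEither (p : ℕ) {A : Type*} [CommRing A] {n : ℕ}
    (S : Set (Matrix (Fin n) (Fin n) (WittVector p A))) : Prop :=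
  (∃ s : ℕ, Odd p ∧ 1 ≤ s ∧ s ≤ (p - 1) / 2 ∧ S = SigmaS p s) ∨
  (∃ t : ℕ, 1 ≤ t ∧ S = SigmaOneT p t)

/-- A matrix of Witt vectors lies entrywise in `V^d` if the `j`-th Witt coordinates of all its
entries vanish for all `j < d`. -/
def EntrywiseV (p : ℕ) {A : Type*} [Zero A] {n : ℕ} (d : ℕ)
    (X : Matrix (Fin n) (Fin n) (WittVector p A)) : Prop :=
  ∀ j < d, wittPi p j X = 0

/-- V-adic convergence of a sequence of matrices of Witt vectors. -/
def TendstoV (p : ℕ) [Fact p.Prime] {A : Type*} [CommRing A] {n : ℕ}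
    (Y : ℕ → Matrix (Fin n) (Fin n) (WittVector p A))
    (L : Matrix (Fin n) (Fin n) (WittVector p A)) : Prop :=
  ∀ d : ℕ, ∃ N₀ : ℕ, ∀ N ≥ N₀, EntrywiseV p d (Y N - L)

/-- `E` is the sequence of exponential partial sums of `X`:
`N! • E N = ∑_{v=1}^{N} (N!/v!) • X^v` for all `N ≥ 1`. -/
def IsExpPartialSums (p : ℕ) [Fact p.Prime] {A : Type*} [CommRing A] {n : ℕ}
    (X : Matrix (Fin n) (Fin n) (WittVector p A))
    (E : ℕ → Matrix (Fin n) (Fin n) (WittVector p A)) : Prop :=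
  ∀ N, 1 ≤ N → N.factorial • E N =
    ∑ v ∈ Finset.Icc 1 N, (N.factorial / v.factorial) • X ^ v

/-- `Lg` is the sequence of logarithmic partial sums of `X`:
`N! • Lg N = ∑_{v=1}^{N} (-1)^(v-1) • (N!/v) • X^v` for all `N ≥ 1`. -/
def IsLogPartialSums (p : ℕ) [Fact p.Prime] {A : Type*} [CommRing A] {n : ℕ}
    (X : Matrix (Fin n) (Fin n) (WittVector p A))
    (Lg : ℕ → Matrix (Fin n) (Fin n) (WittVector p A)) : Prop :=
  ∀ N, 1 ≤ N → (N.factorial : ℤ) • Lg N =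
    ∑ v ∈ Finset.Icc 1 N, ((-1 : ℤ) ^ (v - 1) * ((N.factorial / v : ℕ) : ℤ)) • X ^ v

/-- `L` is the V-adic limit of the exponential partial sums of `X`. -/
def IsExpLimit (p : ℕ) [Fact p.Prime] {A : Type*} [CommRing A] {n : ℕ}
    (X L : Matrix (Fin n) (Fin n) (WittVector p A)) : Prop :=
  ∃ E : ℕ → Matrix (Fin n) (Fin n) (WittVector p A),
    IsExpPartialSums p X E ∧ TendstoV p E L

/-- `L` is the V-adic limit of the logarithmic partial sums of `X`. -/
def IsLogLimit (p : ℕ) [Fact p.Prime] {A : Type*} [CommRing A] {n : ℕ}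
    (X L : Matrix (Fin n) (Fin n) (WittVector p A)) : Prop :=
  ∃ Lg : ℕ → Matrix (Fin n) (Fin n) (WittVector p A),
    IsLogPartialSums p X Lg ∧ TendstoV p Lg L

/-!
Write `[A, Ψ] x = A (Ψ x) - Ψ (A x)`. It is additive in `A`, satisfies
`[A B, Ψ] x = A ([B, Ψ] x) + [A, Ψ] (B x)`, and `Ψ` commutes with multiplication by `p`.
On both `Σ_s` and `Σ_{1,t}` some power `X^s` with `2 s ≤ p` is divisible by `p`; splitting
`X^v = X^s X^(v-s)` then shows `[X^v, Ψ] ≡ 0 mod p^(m + ⌊v/s⌋ - 1)`. Legendre's bound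
`(p - 1) v_p(v!) < v` and `2 s ≤ p` give `v_p(v!) ≤ ⌊v/s⌋ - 1`, so every term of `N! E_N` and
of `N! L_N` commutes with `Ψ` modulo `p^(m + v_p(N!))`. Since `N!` is `p^(v_p(N!))` times a unit
of `W(k)`, `[E_N, Ψ]` and `[L_N, Ψ]` vanish mod `p^m`, and this passes to the `V`-adic limit
because `V^m W(k) = p^m W(k)`.
-/

open WittVector

section Arithmetic

variable {p : ℕ} [hp : Fact p.Prime]

lemma padicValNat_factorial_le_div_sub_one {s : ℕ} (hs : 0 < s) (hsp : 2 * s ≤ p) (v : ℕ) :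
    padicValNat p v.factorial ≤ v / s - 1 := by
  rcases Nat.eq_zero_or_pos (padicValNat p v.factorial) with hν | hν
  · omega
  have hv : v ≠ 0 := by rintro rfl; simp at hν
  have hlegendre := sub_one_mul_padicValNat_factorial_lt_of_ne_zero p hv
  have hp2 := hp.out.two_le
  generalize padicValNat p v.factorial = ν at *
  have hmul : (ν + 1) * s ≤ v := by
    obtain ⟨q, rfl⟩ : ∃ q, p = q + 1 := ⟨p - 1, by omega⟩
    rw [Nat.add_sub_cancel] at hlegendre
    -- `2 s (ν + 1) ≤ (q + 1) (ν + 1) ≤ 2 q ν + 2`, the last step by `(q - 1) (ν - 1) ≥ 0`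
    nlinarith
  exact Nat.le_sub_one_of_lt ((Nat.le_div_iff_mul_le hs).2 hmul)

lemma pow_padicValNat_dvd_div_mul_pow {a b e : ℕ} (hab : a ∣ b) (hb : b ≠ 0)
    (he : padicValNat p a ≤ e) : p ^ padicValNat p b ∣ b / a * p ^ e := by
  obtain ⟨c, rfl⟩ := hab
  have ha : a ≠ 0 := left_ne_zero_of_mul hb
  rw [Nat.mul_div_cancel_left c (Nat.pos_of_ne_zero ha),
    padicValNat.mul ha (right_ne_zero_of_mul hb), pow_add, mul_comm (p ^ _)]
  exact mul_dvd_mul pow_padicValNat_dvd (pow_dvd_pow p he)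

end Arithmetic

section WittVector

variable {p : ℕ} [hp : Fact p.Prime] {k : Type*}

lemma exists_eq_pow_smul_of_entrywiseV [CommRing k] [CharP k p] [PerfectRing k p] {n d : ℕ}
    {A : Matrix (Fin n) (Fin n) (WittVector p k)} (hA : EntrywiseV p d A) :
    ∃ B, A = (p : WittVector p k) ^ d • B := by
  have h i j : (p : WittVector p k) ^ d ∣ A i j := by
    rw [← Ideal.mem_span_singleton, mem_span_p_pow_iff_le_coeff_eq_zero]
    exact fun l hl => congrFun (congrFun (hA l hl) i) j
  choose B hB using h
  exact ⟨Matrix.of B, Matrix.ext fun i j => hB i j⟩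

lemma wittPi_zero_pow [CommRing k] {n : ℕ} (X : Matrix (Fin n) (Fin n) (WittVector p k))
    (s : ℕ) : wittPi p 0 (X ^ s) = wittPi p 0 X ^ s :=
  map_pow (constantCoeff : WittVector p k →+* k).mapMatrix X s

lemma exists_pow_eq_p_smul_of_isSigmaEither [CommRing k] [CharP k p] [PerfectRing k p] {n : ℕ}
    {S : Set (Matrix (Fin n) (Fin n) (WittVector p k))} (hS : IsSigmaEither p S)
    {X : Matrix (Fin n) (Fin n) (WittVector p k)} (hX : X ∈ S) :
    ∃ s, 0 < s ∧ 2 * s ≤ p ∧ ∃ B, X ^ s = (p : WittVector p k) • B := by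
  rcases hS with ⟨s, -, hs, hsp, rfl⟩ | ⟨_, -, rfl⟩
  · refine ⟨s, hs, by omega, ?_⟩
    have hXs : EntrywiseV p 1 (X ^ s) := by
      intro j hj
      rw [Nat.lt_one_iff.1 hj, wittPi_zero_pow]
      exact hX
    simpa using exists_eq_pow_smul_of_entrywiseV hXs
  · have hX1 : EntrywiseV p 1 X := fun j hj => Nat.lt_one_iff.1 hj ▸ hX.1
    obtain ⟨B, hB⟩ := exists_eq_pow_smul_of_entrywiseV hX1
    exact ⟨1, one_pos, hp.out.two_le, B, by simpa using hB⟩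

variable [Field k] [CharP k p]

lemma isUnit_natCast_of_not_dvd {b : ℕ} (hb : ¬ p ∣ b) : IsUnit (b : WittVector p k) := by
  refine isUnit_of_coeff_zero_ne_zero _ ?_
  change constantCoeff (b : WittVector p k) ≠ 0
  rwa [map_natCast, ne_eq, CharP.cast_eq_zero_iff k p]

lemma exists_eq_pow_smul_of_natCast_smul_eq {M : Type*} [AddCommGroup M] [Module (WittVector p k) M]
    [Module.IsTorsionFree (WittVector p k) M] {a m : ℕ} (ha : a ≠ 0) {c y : M}
    (h : (a : WittVector p k) • c = (p : WittVector p k) ^ (m + padicValNat p a) • y) :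
    ∃ z, c = (p : WittVector p k) ^ m • z := by
  obtain ⟨u, hu⟩ := isUnit_natCast_of_not_dvd (k := k) (Nat.not_dvd_ordCompl hp.out ha)
  have ha_eq : (a : WittVector p k) = (p : WittVector p k) ^ padicValNat p a * u := by
    rw [hu, ← Nat.factorization_def a hp.out, ← Nat.cast_pow, ← Nat.cast_mul,
      Nat.ordProj_mul_ordCompl_eq_self]
  have huc : (u : WittVector p k) • c = (p : WittVector p k) ^ m • y := by
    apply smul_right_injective M (pow_ne_zero (padicValNat p a) (p_nonzero p k))
    rw [ha_eq, pow_add, mul_smul, mul_smul, smul_comm ((p : WittVector p k) ^ m)] at h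
    exact h
  refine ⟨(↑u⁻¹ : WittVector p k) • y, ?_⟩
  rw [smul_comm, ← huc, smul_smul, u.inv_mul, one_smul]

lemma exists_eq_pow_smul_of_zsmul_eq_sum {M ι : Type*} [AddCommGroup M]
    [Module (WittVector p k) M] [Module.IsTorsionFree (WittVector p k) M] {a m : ℕ} (ha : a ≠ 0)
    (t : Finset ι) (c : ι → ℤ) (e : ι → ℕ) {w : M} (w' : ι → M)
    (h : (a : ℤ) • w = ∑ i ∈ t, c i • w' i)
    (hw' : ∀ i ∈ t, ∃ y, w' i = (p : WittVector p k) ^ (m + e i) • y)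
    (hc : ∀ i ∈ t, (p : ℤ) ^ padicValNat p a ∣ c i * p ^ e i) :
    ∃ z, w = (p : WittVector p k) ^ m • z := by
  have hterm :
      ∀ i ∈ t, ∃ y, c i • w' i = (p : WittVector p k) ^ (m + padicValNat p a) • y := by
    intro i hi
    obtain ⟨y, hy⟩ := hw' i hi
    obtain ⟨d, hd⟩ := hc i hi
    have hcoeff : (c i : WittVector p k) * (p : WittVector p k) ^ (m + e i) =
        (p : WittVector p k) ^ (m + padicValNat p a) * d := by
      have := congrArg (Int.cast : ℤ → WittVector p k) hd
      push_cast at this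
      linear_combination (p : WittVector p k) ^ m * this
    refine ⟨(d : WittVector p k) • y, ?_⟩
    rw [hy, ← Int.cast_smul_eq_zsmul (WittVector p k), smul_smul, hcoeff, mul_smul]
  choose! y hy using hterm
  refine exists_eq_pow_smul_of_natCast_smul_eq ha (y := ∑ i ∈ t, y i) ?_
  rw [Nat.cast_smul_eq_nsmul, ← natCast_zsmul, h, Finset.sum_congr rfl hy, Finset.smul_sum]

end WittVector

lemma map_pow_smul_of_map_smul {R M N : Type*} [Monoid R] [MulAction R M] [MulAction R N]
    {f : M → N} {q : R} (hf : ∀ x, f (q • x) = q • f x) (c : ℕ) (x : M) :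
    f (q ^ c • x) = q ^ c • f x := by
  induction c with
  | zero => simp
  | succ c ih => rw [pow_succ', mul_smul, hf, ih, mul_smul]

lemma exists_pow_smul_add_pow_smul_eq {R M : Type*} [Monoid R] [AddMonoid M] [DistribMulAction R M]
    {q : R} {a b e : ℕ} (ha : e ≤ a) (hb : e ≤ b) (y z : M) :
    ∃ w, q ^ a • y + q ^ b • z = q ^ e • w :=
  ⟨q ^ (a - e) • y + q ^ (b - e) • z, by
    rw [smul_add, smul_smul, smul_smul, ← pow_add, ← pow_add, Nat.add_sub_cancel' ha,
      Nat.add_sub_cancel' hb]⟩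

lemma exists_pow_eq_pow_div_smul {R A : Type*} [CommSemiring R] [Semiring A] [Algebra R A]
    {q : R} {X B : A} {s : ℕ} (hXs : X ^ s = q • B) (v : ℕ) :
    ∃ C, X ^ v = q ^ (v / s) • C :=
  ⟨B ^ (v / s) * X ^ (v % s), by
    rw [← smul_mul_assoc, ← smul_pow, ← hXs, ← pow_mul, ← pow_add, Nat.div_add_mod]⟩

section MulVecCommutator

open Matrix

variable {R ι : Type*} [CommRing R] [Fintype ι] (Ψ : (ι → R) →+ (ι → R))

def mulVecCommutator (x : ι → R) : Matrix ι ι R →+ (ι → R) where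
  toFun A := A *ᵥ Ψ x - Ψ (A *ᵥ x)
  map_zero' := by simp
  map_add' A B := by simp only [add_mulVec, map_add]; abel

def CommutesMod (a : R) (A : Matrix ι ι R) : Prop :=
  ∀ x, ∃ y, mulVecCommutator Ψ x A = a • y

variable {Ψ}

lemma mulVecCommutator_apply (x : ι → R) (A : Matrix ι ι R) :
    mulVecCommutator Ψ x A = A *ᵥ Ψ x - Ψ (A *ᵥ x) := rfl

lemma mulVecCommutator_one [DecidableEq ι] (x : ι → R) : mulVecCommutator Ψ x 1 = 0 := by
  simp [mulVecCommutator_apply]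

lemma mulVecCommutator_mul (x : ι → R) (A B : Matrix ι ι R) :
    mulVecCommutator Ψ x (A * B) =
      A *ᵥ mulVecCommutator Ψ x B + mulVecCommutator Ψ (B *ᵥ x) A := by
  simp only [mulVecCommutator_apply, ← mulVec_mulVec, mulVec_sub]
  abel

lemma CommutesMod.sub {a : R} {A B : Matrix ι ι R} (hA : CommutesMod Ψ a A)
    (hB : CommutesMod Ψ a B) : CommutesMod Ψ a (A - B) := fun x => by
  obtain ⟨y, hy⟩ := hA x
  obtain ⟨z, hz⟩ := hB x
  exact ⟨y - z, by rw [map_sub, hy, hz, smul_sub]⟩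

lemma CommutesMod.pow [DecidableEq ι] {a : R} {X : Matrix ι ι R} (hX : CommutesMod Ψ a X)
    (v : ℕ) : CommutesMod Ψ a (X ^ v) := by
  induction v with
  | zero => exact fun x => ⟨0, by rw [pow_zero, mulVecCommutator_one, smul_zero]⟩
  | succ v ih =>
    intro x
    obtain ⟨y, hy⟩ := ih x
    obtain ⟨z, hz⟩ := hX (X ^ v *ᵥ x)
    exact ⟨X *ᵥ y + z, by rw [pow_succ', mulVecCommutator_mul, hy, hz, mulVec_smul, smul_add]⟩

variable {q : R} (hΨ : ∀ x, Ψ (q • x) = q • Ψ x)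
include hΨ

lemma mulVecCommutator_pow_smul (c : ℕ) (x : ι → R) (A : Matrix ι ι R) :
    mulVecCommutator Ψ (q ^ c • x) A = q ^ c • mulVecCommutator Ψ x A := by
  simp only [mulVecCommutator_apply, map_pow_smul_of_map_smul hΨ, mulVec_smul, smul_sub]

lemma commutesMod_pow_smul (m : ℕ) (D : Matrix ι ι R) : CommutesMod Ψ (q ^ m) (q ^ m • D) :=
  fun x => ⟨mulVecCommutator Ψ x D, by
    simp only [mulVecCommutator_apply, smul_mulVec, map_pow_smul_of_map_smul hΨ, smul_sub]⟩

lemma CommutesMod.pow_of_pow_eq_smul [DecidableEq ι] {m s : ℕ} {X B : Matrix ι ι R}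
    (hX : CommutesMod Ψ (q ^ m) X) (hXs : X ^ s = q • B) (v : ℕ) :
    CommutesMod Ψ (q ^ (m + (v / s - 1))) (X ^ v) := by
  induction v using Nat.strong_induction_on with
  | _ v ih =>
  by_cases hvs : v / s = 0
  · rw [hvs]
    exact hX.pow v
  obtain ⟨hs, hsv⟩ : 0 < s ∧ s ≤ v := by rw [Nat.div_eq_zero_iff] at hvs; omega
  obtain ⟨u, rfl⟩ := Nat.exists_eq_add_of_le hsv
  have hdiv : (s + u) / s - 1 = u / s := by
    rw [Nat.add_comm, Nat.add_div_right u hs, Nat.add_sub_cancel]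
  rw [hdiv]
  intro x
  obtain ⟨y, hy⟩ := ih u (by omega) x
  obtain ⟨C, hC⟩ := exists_pow_eq_pow_div_smul hXs u
  obtain ⟨z, hz⟩ := hX.pow s (C *ᵥ x)
  have h₁ :
      X ^ s *ᵥ mulVecCommutator Ψ x (X ^ u) = q ^ (m + (u / s - 1) + 1) • (B *ᵥ y) := by
    rw [hy, hXs, smul_mulVec, mulVec_smul, smul_smul, ← pow_succ']
  have h₂ : mulVecCommutator Ψ (X ^ u *ᵥ x) (X ^ s) = q ^ (u / s + m) • z := by
    rw [hC, smul_mulVec, mulVecCommutator_pow_smul hΨ, hz, smul_smul, ← pow_add]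
  rw [pow_add, mulVecCommutator_mul, h₁, h₂]
  exact exists_pow_smul_add_pow_smul_eq (by omega) (by omega) _ _

end MulVecCommutator

section ExpLog

open Matrix

variable {p : ℕ} [Fact p.Prime] {k : Type*} {n m : ℕ}

lemma commutesMod_of_tendstoV [CommRing k] [CharP k p] [PerfectRing k p]
    {Ψ : (Fin n → WittVector p k) →+ (Fin n → WittVector p k)}
    (hΨ : ∀ x, Ψ ((p : WittVector p k) • x) = (p : WittVector p k) • Ψ x)
    {E : ℕ → Matrix (Fin n) (Fin n) (WittVector p k)}
    {Y : Matrix (Fin n) (Fin n) (WittVector p k)}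
    (hE : ∀ N, 1 ≤ N → CommutesMod Ψ ((p : WittVector p k) ^ m) (E N))
    (hEY : TendstoV p E Y) :
    CommutesMod Ψ ((p : WittVector p k) ^ m) Y := by
  obtain ⟨N₀, hN₀⟩ := hEY m
  obtain ⟨D, hD⟩ := exists_eq_pow_smul_of_entrywiseV (hN₀ (max N₀ 1) (le_max_left _ _))
  rw [← sub_sub_cancel (E (max N₀ 1)) Y, hD]
  exact (hE _ (le_max_right _ _)).sub (commutesMod_pow_smul hΨ m D)

variable [Field k] [CharP k p] {s : ℕ}
  {Ψ : (Fin n → WittVector p k) →+ (Fin n → WittVector p k)}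
  (hΨ : ∀ x, Ψ ((p : WittVector p k) • x) = (p : WittVector p k) • Ψ x)
  {X B : Matrix (Fin n) (Fin n) (WittVector p k)}
  (hX : CommutesMod Ψ ((p : WittVector p k) ^ m) X) (hXs : X ^ s = (p : WittVector p k) • B)
include hΨ hX hXs

lemma commutesMod_of_zsmul_eq_sum {a : ℕ} (ha : a ≠ 0) (t : Finset ℕ) (c : ℕ → ℤ)
    {A : Matrix (Fin n) (Fin n) (WittVector p k)}
    (hA : (a : ℤ) • A = ∑ v ∈ t, c v • X ^ v)
    (hc : ∀ v ∈ t, (p : ℤ) ^ padicValNat p a ∣ c v * p ^ (v / s - 1)) :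
    CommutesMod Ψ ((p : WittVector p k) ^ m) A := by
  intro x
  refine exists_eq_pow_smul_of_zsmul_eq_sum ha t c (fun v => v / s - 1)
    (fun v => mulVecCommutator Ψ x (X ^ v)) ?_ (fun v _ => hX.pow_of_pow_eq_smul hΨ hXs v x) hc
  rw [← map_zsmul, hA, map_sum]
  simp only [map_zsmul]

variable (hs : 0 < s) (hsp : 2 * s ≤ p)
include hs hsp

lemma commutesMod_of_isExpPartialSums {E : ℕ → Matrix (Fin n) (Fin n) (WittVector p k)}
    (hE : IsExpPartialSums p X E) (N : ℕ) (hN : 1 ≤ N) :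
    CommutesMod Ψ ((p : WittVector p k) ^ m) (E N) := by
  refine commutesMod_of_zsmul_eq_sum hΨ hX hXs (Nat.factorial_ne_zero N) (Finset.Icc 1 N)
    (fun v => ((N.factorial / v.factorial : ℕ) : ℤ))
    (by simpa only [natCast_zsmul] using hE N hN)
    fun v hv => ?_
  exact_mod_cast pow_padicValNat_dvd_div_mul_pow
    (Nat.factorial_dvd_factorial (Finset.mem_Icc.1 hv).2) (Nat.factorial_ne_zero N)
    (padicValNat_factorial_le_div_sub_one hs hsp v)

lemma commutesMod_of_isLogPartialSums {L : ℕ → Matrix (Fin n) (Fin n) (WittVector p k)}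
    (hL : IsLogPartialSums p X L) (N : ℕ) (hN : 1 ≤ N) :
    CommutesMod Ψ ((p : WittVector p k) ^ m) (L N) := by
  refine commutesMod_of_zsmul_eq_sum hΨ hX hXs (Nat.factorial_ne_zero N) (Finset.Icc 1 N) _
    (hL N hN) fun v hv => ?_
  obtain ⟨hv, hvN⟩ := Finset.mem_Icc.1 hv
  have hval : padicValNat p v ≤ v / s - 1 :=
    ((padicValNat_dvd_iff_le (Nat.factorial_ne_zero v)).1
      (pow_padicValNat_dvd.trans (Nat.dvd_factorial hv le_rfl))).trans
      (padicValNat_factorial_le_div_sub_one hs hsp v)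
  have hdvd :
      (p : ℤ) ^ padicValNat p N.factorial ∣ ((N.factorial / v : ℕ) : ℤ) * p ^ (v / s - 1) := by
    exact_mod_cast pow_padicValNat_dvd_div_mul_pow (Nat.dvd_factorial hv hvN)
      (Nat.factorial_ne_zero N) hval
  rw [mul_assoc]
  exact hdvd.mul_left _

variable [PerfectRing k p]

lemma commutesMod_of_isExpLimit {Y : Matrix (Fin n) (Fin n) (WittVector p k)}
    (hY : IsExpLimit p X Y) : CommutesMod Ψ ((p : WittVector p k) ^ m) Y :=
  let ⟨_, hE, hEY⟩ := hY
  commutesMod_of_tendstoV hΨ (commutesMod_of_isExpPartialSums hΨ hX hXs hs hsp hE) hEY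

lemma commutesMod_of_isLogLimit {Y : Matrix (Fin n) (Fin n) (WittVector p k)}
    (hY : IsLogLimit p X Y) : CommutesMod Ψ ((p : WittVector p k) ^ m) Y :=
  let ⟨_, hL, hLY⟩ := hY
  commutesMod_of_tendstoV hΨ (commutesMod_of_isLogPartialSums hΨ hX hXs hs hsp hL) hLY

end ExpLog

theorem exp_log_commute_mod_p_pow_general (p : ℕ) [Fact p.Prime] (k : Type*) [Field k] [CharP k p]
    [PerfectRing k p] (n m : ℕ)
    (S : Set (Matrix (Fin n) (Fin n) (WittVector p k))) (hS : IsSigmaEither p S)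
    (Φ Θ : (Fin n → WittVector p k) → (Fin n → WittVector p k))
    (hΦadd : ∀ x y, Φ (x + y) = Φ x + Φ y)
    (hΦsemi : ∀ (a : WittVector p k) (x), Φ (a • x) = WittVector.frobenius a • Φ x)
    (hΘadd : ∀ x y, Θ (x + y) = Θ x + Θ y)
    (hΘsemi : ∀ (a : WittVector p k) (x), Θ (WittVector.frobenius a • x) = a • Θ x)
    (X : Matrix (Fin n) (Fin n) (WittVector p k)) (hX : X ∈ S)
    (hXΦ : ∀ x, ∃ y, X.mulVec (Φ x) - Φ (X.mulVec x) = ((p : WittVector p k) ^ m) • y)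
    (hXΘ : ∀ x, ∃ y, X.mulVec (Θ x) - Θ (X.mulVec x) = ((p : WittVector p k) ^ m) • y) :
    (∀ Y, IsExpLimit p X Y →
      (∀ x, ∃ y, Y.mulVec (Φ x) - Φ (Y.mulVec x) = ((p : WittVector p k) ^ m) • y) ∧
      (∀ x, ∃ y, Y.mulVec (Θ x) - Θ (Y.mulVec x) = ((p : WittVector p k) ^ m) • y)) ∧
    (∀ Y, IsLogLimit p X Y →
      (∀ x, ∃ y, Y.mulVec (Φ x) - Φ (Y.mulVec x) = ((p : WittVector p k) ^ m) • y) ∧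
      (∀ x, ∃ y, Y.mulVec (Θ x) - Θ (Y.mulVec x) = ((p : WittVector p k) ^ m) • y)) := by
  obtain ⟨s, hs, hsp, B, hXs⟩ := exists_pow_eq_p_smul_of_isSigmaEither hS hX
  have hΦ : ∀ x, Φ ((p : WittVector p k) • x) = (p : WittVector p k) • Φ x := fun x => by
    simpa only [map_natCast] using hΦsemi p x
  have hΘ : ∀ x, Θ ((p : WittVector p k) • x) = (p : WittVector p k) • Θ x := fun x => by
    simpa only [map_natCast] using hΘsemi p x
  exact ⟨fun Y hY => ⟨commutesMod_of_isExpLimit (Ψ := .mk' Φ hΦadd) hΦ hXΦ hXs hs hsp hY,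
      commutesMod_of_isExpLimit (Ψ := .mk' Θ hΘadd) hΘ hXΘ hXs hs hsp hY⟩,
    fun Y hY => ⟨commutesMod_of_isLogLimit (Ψ := .mk' Φ hΦadd) hΦ hXΦ hXs hs hsp hY,
      commutesMod_of_isLogLimit (Ψ := .mk' Θ hΘadd) hΘ hXΘ hXs hs hsp hY⟩⟩

/-- Fact B.5-type compatibility: if `X ∈ Σ` almost commutes (mod `p^m`) with a Frobenius-linear
map `Φ` and a Verschiebung-linear map `Θ` on `W(k)^n`, then so do `e₁(X)` and `l₁(X)`. -/
theorem exp_log_commute_mod_p_pow (p : ℕ) [Fact p.Prime] (k : Type*) [Field k] [CharP k p]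
    [PerfectRing k p] (n m : ℕ) (hn : 1 ≤ n) (hm : 1 ≤ m)
    (S : Set (Matrix (Fin n) (Fin n) (WittVector p k))) (hS : IsSigmaEither p S)
    (Φ Θ : (Fin n → WittVector p k) → (Fin n → WittVector p k))
    (hΦadd : ∀ x y, Φ (x + y) = Φ x + Φ y)
    (hΦsemi : ∀ (a : WittVector p k) (x), Φ (a • x) = WittVector.frobenius a • Φ x)
    (hΘadd : ∀ x y, Θ (x + y) = Θ x + Θ y)
    (hΘsemi : ∀ (a : WittVector p k) (x), Θ (WittVector.frobenius a • x) = a • Θ x)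
    (hΦΘ : ∀ x, Φ (Θ x) = (p : WittVector p k) • x)
    (hΘΦ : ∀ x, Θ (Φ x) = (p : WittVector p k) • x)
    (X : Matrix (Fin n) (Fin n) (WittVector p k)) (hX : X ∈ S)
    (hXΦ : ∀ x, ∃ y, X.mulVec (Φ x) - Φ (X.mulVec x) = ((p : WittVector p k) ^ m) • y)
    (hXΘ : ∀ x, ∃ y, X.mulVec (Θ x) - Θ (X.mulVec x) = ((p : WittVector p k) ^ m) • y) :
    (∀ Y, IsExpLimit p X Y →
      (∀ x, ∃ y, Y.mulVec (Φ x) - Φ (Y.mulVec x) = ((p : WittVector p k) ^ m) • y) ∧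
      (∀ x, ∃ y, Y.mulVec (Θ x) - Θ (Y.mulVec x) = ((p : WittVector p k) ^ m) • y)) ∧
    (∀ Y, IsLogLimit p X Y →
      (∀ x, ∃ y, Y.mulVec (Φ x) - Φ (Y.mulVec x) = ((p : WittVector p k) ^ m) • y) ∧
      (∀ x, ∃ y, Y.mulVec (Θ x) - Θ (Y.mulVec x) = ((p : WittVector p k) ^ m) • y)) :=
  exp_log_commute_mod_p_pow_general p k n m S hS Φ Θ hΦadd hΦsemi hΘadd hΘsemi X hX hXΦ hXΘ
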